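/- The four elements u₁, u₂, u₃, u₄ of the Kac–Paljutkin algebra K are group-like for Δ_KP: Δ_KP(u_k) = u_k ⊗ u_k for each k = 1, 2, 3, 4, and each u_k is a self-adjoint unitary of K (u_k* = u_k and u_k² = 1). -/

import Mathlib

open TensorProduct Matrix Complex
noncomputable section
set_option synthInstance.maxHeartbeats 1000000
set_option maxHeartbeats 1000000

/-- 2×2 complex matrices. -/
abbrev M2 : Type := Matrix (Fin 2) (Fin 2) ℂ

/-- The underlying algebra of the Kac–Paljutkin algebra: `ℂ × ℂ × ℂ × ℂ × M₂(ℂ)`. -/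
abbrev KP : Type := ℂ × ℂ × ℂ × ℂ × M2

/-- The central idempotent ε. -/
def εK : KP := (1,0,0,0,0)
/-- The central idempotent α. -/
def αK : KP := (0,1,0,0,0)
/-- The central idempotent β. -/
def βK : KP := (0,0,1,0,0)
/-- The central idempotent γ. -/
def γK : KP := (0,0,0,1,0)

/-- Matrix units of `M₂(ℂ)`. -/
def eM (i j : Fin 2) : M2 := Matrix.single i j 1

/-- The matrix units of the `M₂(ℂ)` summand, viewed inside `KP`. -/
def εKij (i j : Fin 2) : KP := (0,0,0,0, eM i j)

def uA : M2 := !![0, I; 1, 0]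
def uB : M2 := !![0, 1; I, 0]
def uC : M2 := !![-1, 0; 0, 1]

/-- Embedding of the matrix summand, as a linear map. -/
def mLin : M2 →ₗ[ℂ] KP where
  toFun x := (0,0,0,0,x)
  map_add' x y := by simp [Prod.ext_iff]
  map_smul' c x := by simp [Prod.ext_iff]

def pε : KP →ₗ[ℂ] ℂ := LinearMap.fst ℂ ℂ _
def pα : KP →ₗ[ℂ] ℂ := (LinearMap.fst ℂ ℂ _) ∘ₗ (LinearMap.snd ℂ ℂ _)
def pβ : KP →ₗ[ℂ] ℂ :=
  (LinearMap.fst ℂ ℂ _) ∘ₗ (LinearMap.snd ℂ ℂ _) ∘ₗ (LinearMap.snd ℂ ℂ _)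
def pγ : KP →ₗ[ℂ] ℂ :=
  (LinearMap.fst ℂ ℂ _) ∘ₗ (LinearMap.snd ℂ ℂ _) ∘ₗ (LinearMap.snd ℂ ℂ _) ∘ₗ
    (LinearMap.snd ℂ ℂ _)
def pM : KP →ₗ[ℂ] M2 :=
  (LinearMap.snd ℂ ℂ _) ∘ₗ (LinearMap.snd ℂ ℂ _) ∘ₗ (LinearMap.snd ℂ ℂ _) ∘ₗ
    (LinearMap.snd ℂ ℂ _)

/-- Conjugation `x ↦ u x u*` by a fixed matrix, as a linear map. -/
def conjBy (u : M2) : M2 →ₗ[ℂ] M2 := (LinearMap.mulLeft ℂ u) ∘ₗ (LinearMap.mulRight ℂ uᴴ)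

/-- Entrywise complex conjugate of a matrix. -/
def cconj (u : M2) : M2 := u.map (starRingEnd ℂ)

/-- Value of the comultiplication on ε. -/
def Dε : KP ⊗[ℂ] KP :=
  εK ⊗ₜ[ℂ] εK + αK ⊗ₜ[ℂ] αK + βK ⊗ₜ[ℂ] βK + γK ⊗ₜ[ℂ] γK +
    (2⁻¹ : ℂ) • (εKij 0 0 ⊗ₜ[ℂ] εKij 0 0 + εKij 0 1 ⊗ₜ[ℂ] εKij 0 1 +
      εKij 1 0 ⊗ₜ[ℂ] εKij 1 0 + εKij 1 1 ⊗ₜ[ℂ] εKij 1 1)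

/-- Value of the comultiplication on α. -/
def Dα : KP ⊗[ℂ] KP :=
  εK ⊗ₜ[ℂ] αK + αK ⊗ₜ[ℂ] εK + βK ⊗ₜ[ℂ] γK + γK ⊗ₜ[ℂ] βK +
    (2⁻¹ : ℂ) • (εKij 0 0 ⊗ₜ[ℂ] εKij 1 1 + I • (εKij 0 1 ⊗ₜ[ℂ] εKij 1 0) -
      I • (εKij 1 0 ⊗ₜ[ℂ] εKij 0 1) + εKij 1 1 ⊗ₜ[ℂ] εKij 0 0)

/-- Value of the comultiplication on β. -/
def Dβ : KP ⊗[ℂ] KP :=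
  εK ⊗ₜ[ℂ] βK + βK ⊗ₜ[ℂ] εK + αK ⊗ₜ[ℂ] γK + γK ⊗ₜ[ℂ] αK +
    (2⁻¹ : ℂ) • (εKij 0 0 ⊗ₜ[ℂ] εKij 1 1 - I • (εKij 0 1 ⊗ₜ[ℂ] εKij 1 0) +
      I • (εKij 1 0 ⊗ₜ[ℂ] εKij 0 1) + εKij 1 1 ⊗ₜ[ℂ] εKij 0 0)

/-- Value of the comultiplication on γ. -/
def Dγ : KP ⊗[ℂ] KP :=
  εK ⊗ₜ[ℂ] γK + γK ⊗ₜ[ℂ] εK + αK ⊗ₜ[ℂ] βK + βK ⊗ₜ[ℂ] αK +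
    (2⁻¹ : ℂ) • (εKij 0 0 ⊗ₜ[ℂ] εKij 0 0 - εKij 0 1 ⊗ₜ[ℂ] εKij 0 1 -
      εKij 1 0 ⊗ₜ[ℂ] εKij 1 0 + εKij 1 1 ⊗ₜ[ℂ] εKij 1 1)

/-- The comultiplication on the matrix summand. -/
def ΔM : M2 →ₗ[ℂ] KP ⊗[ℂ] KP :=
  (TensorProduct.mk ℂ KP KP εK) ∘ₗ mLin
  + (TensorProduct.mk ℂ KP KP αK) ∘ₗ mLin ∘ₗ conjBy uA
  + (TensorProduct.mk ℂ KP KP βK) ∘ₗ mLin ∘ₗ conjBy uB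
  + (TensorProduct.mk ℂ KP KP γK) ∘ₗ mLin ∘ₗ conjBy uC
  + ((TensorProduct.mk ℂ KP KP).flip εK) ∘ₗ mLin
  + ((TensorProduct.mk ℂ KP KP).flip αK) ∘ₗ mLin ∘ₗ conjBy (cconj uA)
  + ((TensorProduct.mk ℂ KP KP).flip βK) ∘ₗ mLin ∘ₗ conjBy (cconj uB)
  + ((TensorProduct.mk ℂ KP KP).flip γK) ∘ₗ mLin ∘ₗ conjBy (cconj uC)

/-- The Kac–Paljutkin comultiplication `Δ_KP : K → K ⊗ K`. -/
def ΔKP : KP →ₗ[ℂ] KP ⊗[ℂ] KP :=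
  pε.smulRight Dε + pα.smulRight Dα + pβ.smulRight Dβ + pγ.smulRight Dγ + ΔM ∘ₗ pM


/-- The 1-dimensional corepresentation u₁ = ε + α + β + γ + I₂. -/
def u1K : KP := (1, 1, 1, 1, 1)
/-- The 1-dimensional corepresentation u₂ = ε − α − β + γ + diag(1,−1). -/
def u2K : KP := (1, -1, -1, 1, !![1, 0; 0, -1])
/-- The 1-dimensional corepresentation u₃ = ε + α + β + γ − I₂. -/
def u3K : KP := (1, 1, 1, 1, -1)
/-- The 1-dimensional corepresentation u₄ = ε − α − β + γ + diag(−1,1). -/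
def u4K : KP := (1, -1, -1, 1, !![-1, 0; 0, 1])

/-!
Each `u_k` has the form `g(a, s) = ε + aα + aβ + γ + s·diag(1, a)` with `a, s ∈ {±1}`.
Conjugation by `u_α`, `u_β` and their entrywise conjugates swaps the diagonal entries, i.e.
multiplies `d = diag(1, a)` by `a`, while `u_γ` fixes it; so `Δ(d) = c ⊗ d + d ⊗ c` with
`c = ε + aα + aβ + γ`. Once `a² = 1`, the terms of `Δε + aΔα + aΔβ + Δγ` assemble into
`c ⊗ c + d ⊗ d`, whence `Δ g = (c + s d) ⊗ (c + s d)` as `s² = 1`. Finally `g(a, s) g(b, t) =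
g(ab, st)` and `g(a, s)* = g(ā, s̄)`.
-/

open ComplexConjugate

lemma conjTranspose_fin_two_of {α : Type*} [Star α] (a b c d : α) :
    !![a, b; c, d]ᴴ = !![star a, star c; star b, star d] := by
  ext i j; fin_cases i <;> fin_cases j <;> rfl

lemma cconj_of (a b c d : ℂ) : cconj !![a, b; c, d] = !![conj a, conj b; conj c, conj d] := by
  ext i j; fin_cases i <;> fin_cases j <;> rfl

lemma conjBy_apply (u x : M2) : conjBy u x = u * x * uᴴ := by
  simp [conjBy, Matrix.mul_assoc]

lemma conjBy_antidiagonal_diagonal {p q : ℂ} (hp : conj p * p = 1) (hq : conj q * q = 1)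
    (x y : ℂ) : conjBy !![0, p; q, 0] !![x, 0; 0, y] = !![y, 0; 0, x] := by
  rw [conjBy_apply, conjTranspose_fin_two_of]
  ext i j
  fin_cases i <;> fin_cases j <;> simp [Matrix.mul_apply, Fin.sum_univ_two]
  · linear_combination y * hp
  · linear_combination x * hq

lemma conjBy_diagonal_diagonal {p q : ℂ} (hp : conj p * p = 1) (hq : conj q * q = 1)
    (x y : ℂ) : conjBy !![p, 0; 0, q] !![x, 0; 0, y] = !![x, 0; 0, y] := by
  rw [conjBy_apply, conjTranspose_fin_two_of]
  ext i j
  fin_cases i <;> fin_cases j <;> simp [Matrix.mul_apply, Fin.sum_univ_two]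
  · linear_combination x * hp
  · linear_combination y * hq

def kpCentralPart (a : ℂ) : KP := εK + a • αK + a • βK + γK

def kpMatrixPart (a : ℂ) : KP := mLin !![1, 0; 0, a]

def kpGrouplike (a s : ℂ) : KP := (1, a, a, 1, s • !![1, 0; 0, a])

lemma kpGrouplike_eq_add (a s : ℂ) :
    kpGrouplike a s = kpCentralPart a + s • kpMatrixPart a := by
  simp [kpGrouplike, kpCentralPart, kpMatrixPart, εK, αK, βK, γK, mLin]

lemma kpMatrixPart_eq (a : ℂ) : kpMatrixPart a = εKij 0 0 + a • εKij 1 1 := by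
  simp only [kpMatrixPart, εKij, eM, mLin, LinearMap.coe_mk, AddHom.coe_mk]
  simp only [Prod.smul_mk, Prod.mk_add_mk, smul_zero, add_zero, Prod.mk.injEq, true_and]
  ext i j
  fin_cases i <;> fin_cases j <;> simp

lemma ΔKP_apply (x : KP) :
    ΔKP x = x.1 • Dε + x.2.1 • Dα + x.2.2.1 • Dβ + x.2.2.2.1 • Dγ + ΔM x.2.2.2.2 := by
  simp [ΔKP, pε, pα, pβ, pγ, pM]

lemma swap_diag_one_eq_smul {a : ℂ} (ha : a ^ 2 = 1) :
    (!![a, 0; 0, 1] : M2) = a • !![1, 0; 0, a] := by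
  ext i j
  fin_cases i <;> fin_cases j <;> simp [← sq, ha]

lemma ΔM_diagonal {a : ℂ} (ha : a ^ 2 = 1) :
    ΔM !![1, 0; 0, a] = kpCentralPart a ⊗ₜ kpMatrixPart a + kpMatrixPart a ⊗ₜ kpCentralPart a := by
  simp only [ΔM, LinearMap.add_apply, LinearMap.comp_apply, mk_apply, LinearMap.flip_apply,
    uA, uB, uC, cconj_of, map_zero, map_one, conj_I, map_neg]
  have hswap {p q : ℂ} (hp : conj p * p = 1) (hq : conj q * q = 1) :
      conjBy !![0, p; q, 0] !![1, 0; 0, a] = a • !![1, 0; 0, a] := by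
    rw [conjBy_antidiagonal_diagonal hp hq, swap_diag_one_eq_smul ha]
  simp (disch := simp) only [hswap, conjBy_diagonal_diagonal, map_smul, kpCentralPart,
    kpMatrixPart, add_tmul, tmul_add, ← smul_tmul', tmul_smul]
  module

lemma Dε_add_smul_Dα_add_smul_Dβ_add_Dγ {a : ℂ} (ha : a ^ 2 = 1) :
    Dε + a • Dα + a • Dβ + Dγ =
      kpCentralPart a ⊗ₜ kpCentralPart a + kpMatrixPart a ⊗ₜ kpMatrixPart a := by
  simp only [Dε, Dα, Dβ, Dγ, kpCentralPart, kpMatrixPart_eq, tmul_add, add_tmul, ← smul_tmul',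
    tmul_smul]
  linear_combination (norm := module)
    -ha • (αK ⊗ₜ[ℂ] αK + αK ⊗ₜ[ℂ] βK + βK ⊗ₜ[ℂ] αK + βK ⊗ₜ[ℂ] βK + εKij 1 1 ⊗ₜ[ℂ] εKij 1 1)

lemma ΔKP_kpGrouplike {a s : ℂ} (ha : a ^ 2 = 1) (hs : s ^ 2 = 1) :
    ΔKP (kpGrouplike a s) = kpGrouplike a s ⊗ₜ kpGrouplike a s := by
  have hΔ : ΔKP (kpGrouplike a s) = Dε + a • Dα + a • Dβ + Dγ + s • ΔM !![1, 0; 0, a] := by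
    simp only [ΔKP_apply, kpGrouplike, one_smul, map_smul]
  rw [hΔ, Dε_add_smul_Dα_add_smul_Dβ_add_Dγ ha, ΔM_diagonal ha, kpGrouplike_eq_add]
  simp only [tmul_add, add_tmul, ← smul_tmul', tmul_smul]
  linear_combination (norm := module) -hs • (kpMatrixPart a ⊗ₜ[ℂ] kpMatrixPart a)

lemma kpGrouplike_mul (a b s t : ℂ) :
    kpGrouplike a s * kpGrouplike b t = kpGrouplike (a * b) (s * t) := by
  simp only [kpGrouplike, Prod.mk_mul_mk, mul_one, smul_mul_smul_comm, Matrix.mul_fin_two]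
  simp

lemma kpGrouplike_one_one : kpGrouplike 1 1 = 1 := by
  simp [kpGrouplike, Matrix.one_fin_two]

lemma star_kpGrouplike (a s : ℂ) : star (kpGrouplike a s) = kpGrouplike (conj a) (conj s) := by
  simp [kpGrouplike, Prod.star_def, Matrix.star_eq_conjTranspose, conjTranspose_fin_two_of]

lemma kpGrouplike_isGrouplike_selfAdjoint_involutive {a s : ℂ} (ha : a = 1 ∨ a = -1)
    (hs : s = 1 ∨ s = -1) :
    ΔKP (kpGrouplike a s) = kpGrouplike a s ⊗ₜ kpGrouplike a s ∧
      star (kpGrouplike a s) = kpGrouplike a s ∧ kpGrouplike a s * kpGrouplike a s = 1 := by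
  have hsq {z : ℂ} (hz : z = 1 ∨ z = -1) : z ^ 2 = 1 := by rcases hz with rfl | rfl <;> norm_num
  have hconj {z : ℂ} (hz : z = 1 ∨ z = -1) : conj z = z := by rcases hz with rfl | rfl <;> simp
  refine ⟨ΔKP_kpGrouplike (hsq ha) (hsq hs), ?_, ?_⟩
  · rw [star_kpGrouplike, hconj ha, hconj hs]
  · rw [kpGrouplike_mul, ← sq, ← sq, hsq ha, hsq hs, kpGrouplike_one_one]

lemma u1K_eq : u1K = kpGrouplike 1 1 := by
  simp [u1K, kpGrouplike, Matrix.one_fin_two]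

lemma u2K_eq : u2K = kpGrouplike (-1) 1 := by
  simp [u2K, kpGrouplike]

lemma u3K_eq : u3K = kpGrouplike 1 (-1) := by
  simp [u3K, kpGrouplike, Matrix.one_fin_two]

lemma u4K_eq : u4K = kpGrouplike (-1) (-1) := by
  simp [u4K, kpGrouplike]

/-- The four 1-dimensional corepresentations `u₁, u₂, u₃, u₄` of the
Kac–Paljutkin algebra are group-like for `Δ_KP`, and each is a self-adjoint unitary. -/
theorem KacPaljutkin_one_dimensional_corepresentations_grouplike :
    ΔKP u1K = u1K ⊗ₜ[ℂ] u1K ∧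
    ΔKP u2K = u2K ⊗ₜ[ℂ] u2K ∧
    ΔKP u3K = u3K ⊗ₜ[ℂ] u3K ∧
    ΔKP u4K = u4K ⊗ₜ[ℂ] u4K ∧
    star u1K = u1K ∧ star u2K = u2K ∧ star u3K = u3K ∧ star u4K = u4K ∧
    u1K * u1K = 1 ∧ u2K * u2K = 1 ∧ u3K * u3K = 1 ∧ u4K * u4K = 1 := by
  have hpos : (1 : ℂ) = 1 ∨ (1 : ℂ) = -1 := .inl rfl
  have hneg : (-1 : ℂ) = 1 ∨ (-1 : ℂ) = -1 := .inr rfl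
  obtain ⟨Δ₁, star₁, mul₁⟩ := kpGrouplike_isGrouplike_selfAdjoint_involutive hpos hpos
  obtain ⟨Δ₂, star₂, mul₂⟩ := kpGrouplike_isGrouplike_selfAdjoint_involutive hneg hpos
  obtain ⟨Δ₃, star₃, mul₃⟩ := kpGrouplike_isGrouplike_selfAdjoint_involutive hpos hneg
  obtain ⟨Δ₄, star₄, mul₄⟩ := kpGrouplike_isGrouplike_selfAdjoint_involutive hneg hneg
  rw [u1K_eq, u2K_eq, u3K_eq, u4K_eq]
  exact ⟨Δ₁, Δ₂, Δ₃, Δ₄, star₁, star₂, star₃, star₄, mul₁, mul₂, mul₃, mul₄⟩
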